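/- Let p : ℝ → ℝ be a smooth 2π-periodic function, the support function of an ℓ-convex Legendre curve with ℓ = 1, with algebraic length L = ∫₀^{2π} p(θ) dθ and algebraic area A = (1/2)∫₀^{2π} p(θ)(p(θ) + p''(θ)) dθ. Then L² − 4πA ≥ 0, with equality if and only if the curve is a circle, i.e. if and only if p(θ) = a₀ + a₁ cos θ + b₁ sin θ for some real constants a₀, a₁, b₁. -/

import Mathlib

/-!
Let `c n` be the Fourier coefficients of `p`. Those of `p'` are `i n c n`, integration by parts
gives `∫ p p'' = -∫ p'²`, and `L = 2π c 0`; so Parseval's identity for `p` and `p'` yields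
`L² - 4πA = 4π² ∑_{n ≠ 0} (n² - 1) |c n|²`. All terms are nonnegative, and they all vanish exactly
when `c n = 0` for `|n| ≥ 2`, i.e. when `p` is a trigonometric polynomial of degree at most one.
-/

open Real

/-- The curvature quantity `β = p + p''` of an ℓ-convex Legendre curve (ℓ = 1)
with support function `p`. -/
noncomputable def betaF (p : ℝ → ℝ) : ℝ → ℝ := fun θ => p θ + iteratedDeriv 2 p θ

/-- The algebraic length `L = ∫₀^{2π} p`. -/
noncomputable def algLen (p : ℝ → ℝ) : ℝ := ∫ θ in (0:ℝ)..(2 * π), p θ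

/-- The algebraic area `A = (1/2) ∫₀^{2π} p β`. -/
noncomputable def algArea (p : ℝ → ℝ) : ℝ :=
  (1 / 2) * ∫ θ in (0:ℝ)..(2 * π), p θ * betaF p θ

open MeasureTheory Complex

section FourierCoeffOn

variable {a b : ℝ} (hab : a < b)

theorem fourierCoeffOn_zero {E : Type*} [NormedAddCommGroup E] [NormedSpace ℂ E] [CompleteSpace E]
    (f : ℝ → E) : fourierCoeffOn hab f 0 = (b - a)⁻¹ • ∫ x in a..b, f x := by
  simp [fourierCoeffOn_eq_integral]

theorem hasSum_sq_norm_fourierCoeffOn_of_continuous {g : ℝ → ℂ} (hg : Continuous g) :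
    HasSum (fun n => ‖fourierCoeffOn hab g n‖ ^ 2) ((b - a)⁻¹ * ∫ x in a..b, ‖g x‖ ^ 2) :=
  hasSum_sq_fourierCoeffOn hab <| (memLp_two_iff_integrable_sq_norm hg.aestronglyMeasurable).2 <|
    (hg.norm.pow 2).integrableOn_Icc.mono_set Set.Ioc_subset_Icc_self

theorem fourierCoeffOn_deriv_of_eq {g g' : ℝ → ℂ} (hg : ∀ x ∈ Set.uIcc a b, HasDerivAt g (g' x) x)
    (hg' : IntervalIntegrable g' volume a b) (hgab : g b = g a) (n : ℤ) :
    fourierCoeffOn hab g' n = 2 * π * I * n / (b - a) * fourierCoeffOn hab g n := by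
  rcases eq_or_ne n 0 with rfl | hn
  · rw [fourierCoeffOn_zero, intervalIntegral.integral_eq_sub_of_hasDerivAt hg hg', hgab]
    simp
  · rw [fourierCoeffOn_of_hasDerivAt hab hn hg hg', hgab]
    have : (b - a : ℂ) ≠ 0 := by exact_mod_cast (sub_pos.2 hab).ne'
    have : (n : ℂ) ≠ 0 := by exact_mod_cast hn
    field_simp
    simp

end FourierCoeffOn

theorem fourierCoeff_lift_eq_fourierCoeffOn {T : ℝ} [hT : Fact (0 < T)] {g : ℝ → ℂ}
    (hper : Function.Periodic g T) (n : ℤ) :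
    fourierCoeff hper.lift n = fourierCoeffOn hT.out g n := by
  rw [fourierCoeff_eq_intervalIntegral _ n 0, zero_add, fourierCoeffOn_eq_integral, sub_zero]
  rfl

theorem eq_sum_fourier_of_fourierCoeffOn_eq_zero {T : ℝ} (hT : 0 < T) {g : ℝ → ℂ}
    (hg : Continuous g) (hper : Function.Periodic g T) {s : Finset ℤ}
    (hs : ∀ n ∉ s, fourierCoeffOn hT g n = 0) (x : ℝ) :
    g x = ∑ n ∈ s, fourierCoeffOn hT g n * exp (2 * π * I * n * x / T) := by
  have := Fact.mk hT
  let F : C(AddCircle T, ℂ) := ⟨hper.lift, continuous_coinduced_dom.mpr hg⟩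
  have hF : fourierCoeff F = fourierCoeffOn hT g :=
    funext (fourierCoeff_lift_eq_fourierCoeffOn hper)
  have hsum : HasSum (fun n => fourierCoeff F n • fourier n (x : AddCircle T))
      (∑ n ∈ s, fourierCoeff F n • fourier n (x : AddCircle T)) :=
    hasSum_sum_of_ne_finset_zero fun n hn => by rw [hF, hs n hn, zero_smul]
  have hsummable : Summable (fourierCoeff F) := hF ▸ summable_of_ne_finset_zero hs
  rw [show g x = F x from rfl,
    (has_pointwise_sum_fourier_series_of_summable hsummable x).unique hsum]
  simp [hF]

theorem exists_eq_trig_of_fourierCoeffOn_eq_zero {p : ℝ → ℝ} (hp : Continuous p)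
    (hper : Function.Periodic p (2 * π))
    (hc : ∀ n ∉ ({-1, 0, 1} : Finset ℤ), fourierCoeffOn two_pi_pos (fun θ => (p θ : ℂ)) n = 0) :
    ∃ a₀ a₁ b₁ : ℝ, ∀ θ, p θ = a₀ + a₁ * Real.cos θ + b₁ * Real.sin θ := by
  set c := fourierCoeffOn two_pi_pos (fun θ => (p θ : ℂ))
  refine ⟨(c 0).re, (c 1).re + (c (-1)).re, (c (-1)).im - (c 1).im, fun θ => ?_⟩
  have hexp (n : ℤ) : 2 * π * I * n * θ / ((2 * π : ℝ) : ℂ) = ((n * θ : ℝ) : ℂ) * I := by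
    push_cast; field_simp
  have h := congr_arg re <| eq_sum_fourier_of_fourierCoeffOn_eq_zero (g := fun θ => (p θ : ℂ))
    two_pi_pos (continuous_ofReal.comp hp) (fun x => congr_arg ofReal (hper x)) hc θ
  rw [Finset.sum_insert (by decide), Finset.sum_insert (by decide), Finset.sum_singleton] at h
  simp only [hexp, add_re, mul_re, exp_ofReal_mul_I_re, exp_ofReal_mul_I_im, ofReal_re] at h
  simp only [Int.cast_neg, Int.cast_zero, Int.cast_one, neg_mul, one_mul, zero_mul,
    Real.cos_neg, Real.sin_neg, Real.cos_zero, Real.sin_zero] at h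
  rw [h]
  ring

theorem Function.Periodic.deriv {𝕜 F : Type*} [NontriviallyNormedField 𝕜] [NormedAddCommGroup F]
    [NormedSpace 𝕜 F] {f : 𝕜 → F} {c : 𝕜} (h : Function.Periodic f c) :
    Function.Periodic (deriv f) c := fun x => by
  rw [← deriv_comp_add_const, funext h]

/-- Integration by parts turns `∫ p p''` into `-∫ p'²`. -/
theorem algArea_eq_of_periodic {p : ℝ → ℝ} (hp : ContDiff ℝ 2 p)
    (hper : Function.Periodic p (2 * π)) :
    algArea p = ((∫ θ in (0)..(2 * π), p θ ^ 2) - ∫ θ in (0)..(2 * π), deriv p θ ^ 2) / 2 := by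
  obtain ⟨hd, -, hp'⟩ := (contDiff_succ_iff_deriv (n := 1)).mp hp
  obtain ⟨hd', -, hp''⟩ := (contDiff_succ_iff_deriv (n := 0)).mp hp'
  have hibp := intervalIntegral.integral_mul_deriv_eq_deriv_mul (a := 0) (b := 2 * π)
    (fun x _ => (hd x).hasDerivAt) (fun x _ => (hd' x).hasDerivAt)
    (hp'.continuous.intervalIntegrable _ _) (hp''.continuous.intervalIntegrable _ _)
  rw [hper.eq, hper.deriv.eq, sub_self, zero_sub] at hibp
  have hsplit : (∫ θ in (0)..(2 * π), p θ * betaF p θ)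
      = (∫ θ in (0)..(2 * π), p θ ^ 2) + ∫ θ in (0)..(2 * π), p θ * deriv (deriv p) θ := by
    rw [← intervalIntegral.integral_add (f := fun θ => p θ ^ 2)
      (g := fun θ => p θ * deriv (deriv p) θ) ((hp.continuous.pow 2).intervalIntegrable _ _)
      ((hp.continuous.mul hp''.continuous).intervalIntegrable _ _)]
    congr 1 with θ
    simp only [betaF, iteratedDeriv_succ, iteratedDeriv_zero]
    ring
  simp only [algArea, hsplit, hibp, sq]
  ring

/-- The `n`-th term of `(L² - 4πA) / (2π)²` in terms of the Fourier coefficients `c` of `p`. -/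
noncomputable def deficitTerm (c : ℤ → ℂ) (n : ℤ) : ℝ :=
  if n = 0 then 0 else ((n : ℝ) ^ 2 - 1) * ‖c n‖ ^ 2

theorem deficitTerm_nonneg (c : ℤ → ℂ) (n : ℤ) : 0 ≤ deficitTerm c n := by
  unfold deficitTerm
  split_ifs with hn
  · rfl
  · have : 1 ≤ n ^ 2 := by nlinarith [Int.one_le_abs hn, sq_abs n]
    exact mul_nonneg (sub_nonneg.2 (by exact_mod_cast this)) (sq_nonneg _)

theorem eq_zero_of_deficitTerm_eq_zero {c : ℤ → ℂ} {n : ℤ} (h : deficitTerm c n = 0)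
    (hn : n ∉ ({-1, 0, 1} : Finset ℤ)) : c n = 0 := by
  simp only [Finset.mem_insert, Finset.mem_singleton, not_or] at hn
  have hn2 : 1 < n ^ 2 := by
    rcases (show n ≤ -2 ∨ 2 ≤ n by omega) with hn | hn <;> nlinarith
  simp only [deficitTerm, hn.2.1, if_false, mul_eq_zero, sub_eq_zero, pow_eq_zero_iff two_ne_zero,
    norm_eq_zero] at h
  exact h.resolve_left (by exact_mod_cast hn2.ne')

theorem hasSum_isoperimetric_deficit {p : ℝ → ℝ} (hp : ContDiff ℝ 2 p)
    (hper : Function.Periodic p (2 * π)) :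
    HasSum (deficitTerm (fourierCoeffOn two_pi_pos (fun θ => (p θ : ℂ))))
      ((algLen p ^ 2 - 4 * π * algArea p) / (2 * π) ^ 2) := by
  obtain ⟨hd, -, hp'⟩ := (contDiff_succ_iff_deriv (n := 1)).mp hp
  set c := fourierCoeffOn two_pi_pos (fun θ => (p θ : ℂ))
  have hc' (n : ℤ) :
      fourierCoeffOn two_pi_pos (fun θ => ((deriv p θ : ℝ) : ℂ)) n = n * I * c n := by
    rw [fourierCoeffOn_deriv_of_eq two_pi_pos (fun x _ => (hd x).hasDerivAt.ofReal_comp)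
      ((continuous_ofReal.comp hp'.continuous).intervalIntegrable _ _) (by rw [hper.eq])]
    have : (π : ℂ) ≠ 0 := by exact_mod_cast pi_ne_zero
    push_cast
    field_simp
    ring
  have hP : HasSum (fun n => ‖c n‖ ^ 2) ((2 * π)⁻¹ * ∫ θ in (0)..(2 * π), p θ ^ 2) := by
    simpa only [sub_zero, norm_real, Real.norm_eq_abs, sq_abs] using
      hasSum_sq_norm_fourierCoeffOn_of_continuous (g := fun θ => (p θ : ℂ)) two_pi_pos
        (continuous_ofReal.comp hp.continuous)
  have hP' : HasSum (fun n : ℤ => (n : ℝ) ^ 2 * ‖c n‖ ^ 2)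
      ((2 * π)⁻¹ * ∫ θ in (0)..(2 * π), deriv p θ ^ 2) := by
    simpa only [sub_zero, norm_real, Real.norm_eq_abs, sq_abs, hc', norm_mul, norm_I, mul_one,
      norm_intCast, mul_pow] using
      hasSum_sq_norm_fourierCoeffOn_of_continuous (g := fun θ => ((deriv p θ : ℝ) : ℂ))
        two_pi_pos (continuous_ofReal.comp hp'.continuous)
  have hc0 : c 0 = (algLen p / (2 * π) : ℝ) := by
    simp only [c, fourierCoeffOn_zero, sub_zero, intervalIntegral.integral_ofReal, real_smul,
      algLen]
    push_cast
    ring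
  have hterms : Function.update (fun n : ℤ => (n : ℝ) ^ 2 * ‖c n‖ ^ 2 - ‖c n‖ ^ 2) 0 0 =
      deficitTerm c := by
    funext n
    rcases eq_or_ne n 0 with rfl | hn
    · simp only [deficitTerm, Function.update_self, if_pos]
    · simp only [deficitTerm, Function.update_of_ne hn, hn, if_false]
      ring
  have hsum := (hP'.sub hP).update 0 0
  rw [hterms] at hsum
  refine (congrArg (HasSum _) ?_).mp hsum
  rw [algArea_eq_of_periodic hp hper, hc0, norm_real, Real.norm_eq_abs, sq_abs]
  field_simp
  ring

theorem isoperimetric_deficit_eq_zero_of_eq_trig {p : ℝ → ℝ} {a₀ a₁ b₁ : ℝ}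
    (h : ∀ θ, p θ = a₀ + a₁ * Real.cos θ + b₁ * Real.sin θ) :
    algLen p ^ 2 - 4 * π * algArea p = 0 := by
  obtain rfl : p = fun θ => a₀ + a₁ * Real.cos θ + b₁ * Real.sin θ := funext h
  have hderiv : deriv (fun θ => a₀ + a₁ * Real.cos θ + b₁ * Real.sin θ) =
      fun θ => -a₁ * Real.sin θ + b₁ * Real.cos θ := by
    funext θ
    simp
  have hderiv2 : deriv (fun θ => -a₁ * Real.sin θ + b₁ * Real.cos θ) =
      fun θ => -a₁ * Real.cos θ - b₁ * Real.sin θ := by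
    funext θ
    simp
    ring
  have hβ (θ : ℝ) : betaF (fun θ => a₀ + a₁ * Real.cos θ + b₁ * Real.sin θ) θ = a₀ := by
    simp only [betaF, iteratedDeriv_succ, iteratedDeriv_zero, hderiv, hderiv2]
    ring
  have hL : algLen (fun θ => a₀ + a₁ * Real.cos θ + b₁ * Real.sin θ) = 2 * π * a₀ := by
    rw [algLen, intervalIntegral.integral_add, intervalIntegral.integral_add] <;> simp
  simp only [algArea, hβ, intervalIntegral.integral_mul_const]
  rw [← algLen, hL]
  ring

theorem isoperimetric_inequality_ell_convex
    (p : ℝ → ℝ) (hp : ContDiff ℝ (⊤ : ℕ∞) p)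
    (hper : Function.Periodic p (2 * π)) :
    0 ≤ (algLen p) ^ 2 - 4 * π * algArea p ∧
    ((algLen p) ^ 2 - 4 * π * algArea p = 0 ↔
      ∃ a₀ a₁ b₁ : ℝ, ∀ θ : ℝ,
        p θ = a₀ + a₁ * Real.cos θ + b₁ * Real.sin θ) := by
  have hsum := hasSum_isoperimetric_deficit (hp.of_le (WithTop.coe_le_coe.2 le_top)) hper
  refine ⟨?_, fun h0 => ?_, fun ⟨_, _, _, h⟩ => isoperimetric_deficit_eq_zero_of_eq_trig h⟩
  · exact ((le_div_iff₀ (by positivity)).1 (hsum.nonneg (deficitTerm_nonneg _))).trans_eq'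
      (zero_mul _)
  · rw [h0, zero_div, hasSum_zero_iff_of_nonneg (deficitTerm_nonneg _)] at hsum
    exact exists_eq_trig_of_fourierCoeffOn_eq_zero hp.continuous hper fun n hn =>
      eq_zero_of_deficitTerm_eq_zero (congr_fun hsum n) hn
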